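/- arXiv:math/0010019 — 5 statements merged into one kernel-verified Lean document; each statement's English description precedes it below -/
import Mathlib

section
/- Let H be a complex Hilbert space, N a unital *-subalgebra of the algebra B(H) of bounded linear operators on H, and Ω ∈ H a unit vector that is cyclic for N (i.e. the linear span of {XΩ : X ∈ N} is dense in H). Then for a unit vector ξ ∈ H the following are equivalent: (i) ⟨Xξ, ξ⟩ = ⟨XΩ, Ω⟩ for every X ∈ N; (ii) there exists an isometry W ∈ B(H) (i.e. W*W = 1) commuting with every element of N such that ξ = WΩ. -/
/-!
Since `N` is a *-algebra, equality of the two states on `X⋆X` gives `‖Xξ‖ = ‖XΩ‖` for `X ∈ N`, so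
`XΩ ↦ Xξ` is a well-defined isometry on the dense subspace `NΩ`; its continuous extension `W`
commutes with `N` because `W(XYΩ) = XYξ = X(WYΩ)`. Conversely, `⟪XWΩ, WΩ⟫ = ⟪W⋆WXΩ, Ω⟫`.
-/

open scoped InnerProductSpace

namespace LinearMap

variable {𝕜 𝕜₂ E Eₗ F : Type*} [NormedDivisionRing 𝕜] [NormedDivisionRing 𝕜₂]
  {σ₁₂ : 𝕜 →+* 𝕜₂} [AddCommGroup E] [SeminormedAddCommGroup Eₗ] [NormedAddCommGroup F]
  [Module 𝕜 E] [Module 𝕜₂ F] [IsBoundedSMul 𝕜₂ F] [Module 𝕜 Eₗ] [IsBoundedSMul 𝕜 Eₗ]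
  [CompleteSpace F] {f : E →ₛₗ[σ₁₂] F} {e : E →ₗ[𝕜] Eₗ}

theorem norm_extendOfNorm_apply (h_dense : DenseRange e) (h_norm : ∀ x, ‖f x‖ = ‖e x‖)
    (y : Eₗ) : ‖f.extendOfNorm e y‖ = ‖y‖ := by
  have h_bound : ∃ C, ∀ x, ‖f x‖ ≤ C * ‖e x‖ := ⟨1, fun x => by rw [one_mul, h_norm]⟩
  refine congr_fun (h_dense.equalizer (f.extendOfNorm e).continuous.norm continuous_norm ?_) y
  ext x
  simp only [Function.comp_apply, extendOfNorm_eq h_dense h_bound, h_norm]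

end LinearMap

namespace StarSubalgebra

variable {𝕜 E : Type*} [RCLike 𝕜] [NormedAddCommGroup E] [InnerProductSpace 𝕜 E] [CompleteSpace E]

def evalAt (N : StarSubalgebra 𝕜 (E →L[𝕜] E)) (v : E) : N →ₗ[𝕜] E where
  toFun X := (X : E →L[𝕜] E) v
  map_add' _ _ := rfl
  map_smul' _ _ := rfl

@[simp]
theorem evalAt_apply (N : StarSubalgebra 𝕜 (E →L[𝕜] E)) (v : E) (X : N) :
    N.evalAt v X = (X : E →L[𝕜] E) v :=
  rfl

theorem denseRange_evalAt_iff (N : StarSubalgebra 𝕜 (E →L[𝕜] E)) (v : E) :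
    DenseRange (N.evalAt v) ↔
      Dense (Submodule.span 𝕜 ((fun X : E →L[𝕜] E => X v) '' (N : Set (E →L[𝕜] E))) : Set E) := by
  have h_range : Set.range (N.evalAt v) = (fun X : E →L[𝕜] E => X v) '' (N : Set (E →L[𝕜] E)) := by
    ext; simp
  rw [← h_range, ← LinearMap.coe_range, Submodule.span_eq]
  rfl

theorem norm_apply_eq_of_inner_apply_eq {N : StarSubalgebra 𝕜 (E →L[𝕜] E)} {Ω ξ : E}
    (h_state : ∀ X ∈ N, ⟪X ξ, ξ⟫_𝕜 = ⟪X Ω, Ω⟫_𝕜) {X : E →L[𝕜] E} (hX : X ∈ N) :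
    ‖X ξ‖ = ‖X Ω‖ := by
  have h := h_state _ (mul_mem (star_mem hX) hX)
  simp only [mul_apply_eq_comp, ContinuousLinearMap.star_eq_adjoint,
    ContinuousLinearMap.adjoint_inner_left, inner_self_eq_norm_sq_to_K] at h
  exact (sq_eq_sq₀ (norm_nonneg _) (norm_nonneg _)).mp (mod_cast h)

theorem exists_norm_map_commute_of_inner_apply_eq {N : StarSubalgebra 𝕜 (E →L[𝕜] E)} {Ω ξ : E}
    (h_cyclic : DenseRange (N.evalAt Ω)) (h_state : ∀ X ∈ N, ⟪X ξ, ξ⟫_𝕜 = ⟪X Ω, Ω⟫_𝕜) :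
    ∃ W : E →L[𝕜] E, (∀ x, ‖W x‖ = ‖x‖) ∧ (∀ X ∈ N, Commute W X) ∧ W Ω = ξ := by
  have h_norm (X : N) : ‖N.evalAt ξ X‖ = ‖N.evalAt Ω X‖ :=
    norm_apply_eq_of_inner_apply_eq h_state X.2
  have h_bound : ∃ C, ∀ X, ‖N.evalAt ξ X‖ ≤ C * ‖N.evalAt Ω X‖ :=
    ⟨1, fun X => by rw [one_mul, h_norm]⟩
  set W := (N.evalAt ξ).extendOfNorm (N.evalAt Ω)
  have hW (X : N) : W ((X : E →L[𝕜] E) Ω) = (X : E →L[𝕜] E) ξ :=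
    LinearMap.extendOfNorm_eq h_cyclic h_bound X
  refine ⟨W, LinearMap.norm_extendOfNorm_apply h_cyclic h_norm, fun X hX => ?_, by simpa using hW 1⟩
  refine ContinuousLinearMap.coeFn_injective <|
    h_cyclic.equalizer (W * X).continuous (X * W).continuous (funext fun Y => ?_)
  simpa [hW] using hW (⟨X, hX⟩ * Y)

end StarSubalgebra

theorem ContinuousLinearMap.inner_apply_map_of_commute {𝕜 E : Type*} [RCLike 𝕜]
    [NormedAddCommGroup E] [InnerProductSpace 𝕜 E] [CompleteSpace E] {W X : E →L[𝕜] E}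
    (hW : star W * W = 1) (hWX : Commute W X) (v : E) : ⟪X (W v), W v⟫_𝕜 = ⟪X v, v⟫_𝕜 := by
  rw [← mul_apply_eq_comp, ← hWX.eq, mul_apply_eq_comp, ← adjoint_inner_right, ← star_eq_adjoint,
    ← mul_apply_eq_comp, hW, one_apply_eq_self]

theorem localized_states_are_isometry_images_general
    {H : Type*} [NormedAddCommGroup H] [InnerProductSpace ℂ H] [CompleteSpace H]
    (N : StarSubalgebra ℂ (H →L[ℂ] H)) (Ω : H)
    (hcyc : Dense (Submodule.span ℂ ((fun X : H →L[ℂ] H => X Ω) '' (N : Set (H →L[ℂ] H))) : Set H))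
    (ξ : H) :
    (∀ X ∈ N, ⟪X ξ, ξ⟫_ℂ = ⟪X Ω, Ω⟫_ℂ) ↔
      ∃ W : H →L[ℂ] H, star W * W = 1 ∧ (∀ X ∈ N, W * X = X * W) ∧ ξ = W Ω := by
  constructor
  · intro h_state
    obtain ⟨W, hW_norm, hW_comm, rfl⟩ :=
      StarSubalgebra.exists_norm_map_commute_of_inner_apply_eq
        ((N.denseRange_evalAt_iff Ω).mpr hcyc) h_state
    exact ⟨W, (W.norm_map_iff_adjoint_comp_self).mp hW_norm, hW_comm, rfl⟩
  · rintro ⟨W, hW, hW_comm, rfl⟩ X hX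
    exact ContinuousLinearMap.inner_apply_map_of_commute hW (hW_comm X hX) Ω

/-- For a unit vector `ξ` in a Hilbert space `H` with a unital *-subalgebra `N ⊆ B(H)` and a
cyclic unit vector `Ω` for `N`, the state induced by `ξ` agrees with that induced by `Ω` on `N`
iff `ξ = WΩ` for some isometry `W` commuting with every element of `N`. -/
theorem localized_states_are_isometry_images
    {H : Type*} [NormedAddCommGroup H] [InnerProductSpace ℂ H] [CompleteSpace H]
    (N : StarSubalgebra ℂ (H →L[ℂ] H)) (Ω : H) (hΩ : ‖Ω‖ = 1)
    (hcyc : Dense (Submodule.span ℂ ((fun X : H →L[ℂ] H => X Ω) '' (N : Set (H →L[ℂ] H))) : Set H))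
    (ξ : H) (hξ : ‖ξ‖ = 1) :
    (∀ X ∈ N, ⟪X ξ, ξ⟫_ℂ = ⟪X Ω, Ω⟫_ℂ) ↔
      ∃ W : H →L[ℂ] H, star W * W = 1 ∧ (∀ X ∈ N, W * X = X * W) ∧ ξ = W Ω :=
  localized_states_are_isometry_images_general N Ω hcyc ξ
end

section
/- Let H be a complex Hilbert space, A a densely defined self-adjoint operator on H, Ω ∈ H, and 𝔖 a linear subspace of B(H) that is bounded with respect to A and Ω, i.e. XΩ ∈ D(A) for all X ∈ 𝔖 and Φ : X ↦ A(XΩ) is bounded. Then the restriction of Φ to the unit ball 𝔖₁ = {X ∈ 𝔖 : ‖X‖ ≤ 1} is continuous from the weak operator topology on B(H) to the weak topology on H; in particular, if a net (X_i) in 𝔖₁ converges to 0 in the weak operator topology, then A(X_iΩ) converges to 0 weakly in H. -/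
open scoped InnerProductSpace
open Filter Topology

/-!
Self-adjointness moves `A` onto the test vector: for `η ∈ D(A)`,
`⟪A (X i Ω), η⟫ = ⟪X i Ω, A η⟫ → 0` by weak operator convergence. The vectors `A (X i Ω)` are
uniformly bounded because `Φ` is bounded and `‖X i‖ ≤ 1`, so the functionals `⟪A (X i Ω), ·⟫`
are equicontinuous, and convergence on the dense domain `D(A)` spreads to all of `H`.
-/

theorem IsSelfAdjoint.isFormalAdjoint {𝕜 E : Type*} [RCLike 𝕜] [NormedAddCommGroup E]
    [InnerProductSpace 𝕜 E] [CompleteSpace E] {A : E →ₗ.[𝕜] E} (hA : IsSelfAdjoint A) :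
    A.IsFormalAdjoint A := by
  have h := LinearPMap.adjoint_isFormalAdjoint hA.dense_domain (T := A)
  rwa [LinearPMap.isSelfAdjoint_def.mp hA] at h

theorem tendsto_inner_zero_of_dense {𝕜 E ι : Type*} [RCLike 𝕜] [SeminormedAddCommGroup E]
    [InnerProductSpace 𝕜 E] {l : Filter ι} {y : ι → E} {C : ℝ} (hy : ∀ i, ‖y i‖ ≤ C)
    {s : Set E} (hs : Dense s) (h : ∀ η ∈ s, Tendsto (fun i => ⟪y i, η⟫_𝕜) l (𝓝 0)) (η : E) :
    Tendsto (fun i => ⟪y i, η⟫_𝕜) l (𝓝 0) := by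
  have hequi : Equicontinuous (fun i => ⇑(innerSL 𝕜 (y i))) := by
    refine ((NormedSpace.equicontinuous_TFAE fun i => innerSL 𝕜 (y i)).out 1 5).mpr ?_
    exact ⟨C, fun i => (innerSL_apply_norm 𝕜 (y i)).trans_le (hy i)⟩
  have hclosed := hequi.isClosed_setOfPred_tendsto (l := l) (continuous_const (y := (0 : 𝕜)))
  exact hs.closure_eq.symm.subset.trans (hclosed.closure_subset_iff.mpr h) (Set.mem_univ η)

theorem phi_weakly_continuous_on_unit_ball_general
    {H : Type*} [NormedAddCommGroup H] [InnerProductSpace ℂ H] [CompleteSpace H]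
    (A : H →ₗ.[ℂ] H) (hA : IsSelfAdjoint A)
    (Ω : H) (𝔖 : Submodule ℂ (H →L[ℂ] H))
    (hdom : ∀ X ∈ 𝔖, X Ω ∈ A.domain)
    (hbdd : ∃ C : ℝ, ∀ X : H →L[ℂ] H, ∀ hX : X ∈ 𝔖, ‖A ⟨X Ω, hdom X hX⟩‖ ≤ C * ‖X‖)
    {ι : Type*} (l : Filter ι) (X : ι → H →L[ℂ] H)
    (hXmem : ∀ i, X i ∈ 𝔖) (hXball : ∀ i, ‖X i‖ ≤ 1)
    (hWOT : ∀ ξ η : H, Tendsto (fun i => ⟪(X i) ξ, η⟫_ℂ) l (nhds 0)) :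
    ∀ η : H, Tendsto (fun i => ⟪A ⟨X i Ω, hdom (X i) (hXmem i)⟩, η⟫_ℂ) l (nhds 0) := by
  obtain ⟨C, hC⟩ := hbdd
  have hbound (i : ι) : ‖A ⟨X i Ω, hdom (X i) (hXmem i)⟩‖ ≤ |C| :=
    calc ‖A ⟨X i Ω, hdom (X i) (hXmem i)⟩‖ ≤ C * ‖X i‖ := hC (X i) (hXmem i)
      _ ≤ |C| * ‖X i‖ := by gcongr; exact le_abs_self C
      _ ≤ |C| := mul_le_of_le_one_right (abs_nonneg C) (hXball i)
  refine tendsto_inner_zero_of_dense hbound hA.dense_domain fun η hη => ?_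
  rw [funext fun i => hA.isFormalAdjoint ⟨X i Ω, hdom (X i) (hXmem i)⟩ ⟨η, hη⟩]
  exact hWOT Ω (A ⟨η, hη⟩)

/-- If `𝔖 ⊆ B(H)` is a linear subspace that is bounded with respect to a densely defined
self-adjoint operator `A` and a vector `Ω` (i.e. `XΩ ∈ D(A)` for `X ∈ 𝔖` and
`Φ : X ↦ A(XΩ)` is bounded), then `Φ` restricted to the unit ball of `𝔖` is continuous from
the weak operator topology to the weak topology: if a net `(X i)` in the unit ball of `𝔖`
converges to `0` in the weak operator topology, then `A (X i Ω)` converges weakly to `0`. -/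
theorem phi_weakly_continuous_on_unit_ball
    {H : Type*} [NormedAddCommGroup H] [InnerProductSpace ℂ H] [CompleteSpace H]
    (A : H →ₗ.[ℂ] H) (hA : IsSelfAdjoint A) (hdense : Dense (A.domain : Set H))
    (Ω : H) (𝔖 : Submodule ℂ (H →L[ℂ] H))
    (hdom : ∀ X ∈ 𝔖, X Ω ∈ A.domain)
    (hbdd : ∃ C : ℝ, ∀ X : H →L[ℂ] H, ∀ hX : X ∈ 𝔖, ‖A ⟨X Ω, hdom X hX⟩‖ ≤ C * ‖X‖)
    {ι : Type*} (l : Filter ι) (X : ι → H →L[ℂ] H)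
    (hXmem : ∀ i, X i ∈ 𝔖) (hXball : ∀ i, ‖X i‖ ≤ 1)
    (hWOT : ∀ ξ η : H, Tendsto (fun i => ⟪(X i) ξ, η⟫_ℂ) l (nhds 0)) :
    ∀ η : H, Tendsto (fun i => ⟪A ⟨X i Ω, hdom (X i) (hXmem i)⟩, η⟫_ℂ) l (nhds 0) :=
  phi_weakly_continuous_on_unit_ball_general A hA Ω 𝔖 hdom hbdd l X hXmem hXball hWOT
end

section
/- Let H be a complex Hilbert space, A a densely defined self-adjoint operator on H, Ω ∈ H, and 𝔖 a norm-closed linear subspace of B(H) such that XΩ ∈ D(A) for every X ∈ 𝔖. Then the linear map Φ : 𝔖 → H, Φ(X) = A(XΩ), is automatically bounded: there exists C > 0 with ‖A(XΩ)‖ ≤ C‖X‖ for all X ∈ 𝔖. -/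
/-!
Since `A` is self-adjoint it is closed. The map `X ↦ A (X Ω)` is the composite of the bounded
map `X ↦ X Ω` with the closed operator `A`, so its graph is the preimage of the graph of `A`
and hence closed. The subspace `𝔖` is a Banach space, so the closed graph theorem applies.
-/

namespace LinearPMap

section Algebraic

variable {R E F G : Type*} [Ring R] [AddCommGroup E] [Module R E] [AddCommGroup F] [Module R F]
  [AddCommGroup G] [Module R G]

def compOfMemDomain (A : F →ₗ.[R] G) (T : E →ₗ[R] F) (hT : ∀ x, T x ∈ A.domain) :
    E →ₗ[R] G :=
  A.toFun ∘ₗ T.codRestrict A.domain hT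

theorem compOfMemDomain_apply (A : F →ₗ.[R] G) (T : E →ₗ[R] F) (hT : ∀ x, T x ∈ A.domain)
    (x : E) : A.compOfMemDomain T hT x = A ⟨T x, hT x⟩ :=
  rfl

theorem graph_compOfMemDomain (A : F →ₗ.[R] G) (T : E →ₗ[R] F) (hT : ∀ x, T x ∈ A.domain) :
    ((A.compOfMemDomain T hT).graph : Set (E × G)) = Prod.map T id ⁻¹' A.graph := by
  ext ⟨x, y⟩
  simp only [SetLike.mem_coe, LinearMap.mem_graph_iff, compOfMemDomain_apply, Set.mem_preimage,
    Prod.map_apply, id]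
  constructor
  · rintro rfl
    exact A.mem_graph ⟨T x, hT x⟩
  · intro hxy
    exact A.mem_graph_snd_inj hxy (A.mem_graph ⟨T x, hT x⟩) rfl

end Algebraic

variable {𝕜 E F G : Type*} [NontriviallyNormedField 𝕜]
  [NormedAddCommGroup E] [NormedSpace 𝕜 E] [NormedAddCommGroup F] [NormedSpace 𝕜 F]
  [NormedAddCommGroup G] [NormedSpace 𝕜 G]

theorem IsClosed.continuous_compOfMemDomain [CompleteSpace E] [CompleteSpace G]
    {A : F →ₗ.[𝕜] G} (hA : A.IsClosed) (T : E →L[𝕜] F) (hT : ∀ x, T x ∈ A.domain) :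
    Continuous (A.compOfMemDomain (T : E →ₗ[𝕜] F) hT) := by
  refine LinearMap.continuous_of_isClosed_graph _ ?_
  rw [graph_compOfMemDomain]
  exact hA.preimage (T.continuous.prodMap continuous_id)

end LinearPMap

theorem phi_automatically_bounded_of_normClosed_general
    {H : Type*} [NormedAddCommGroup H] [InnerProductSpace ℂ H] [CompleteSpace H]
    (A : H →ₗ.[ℂ] H) (hA : IsSelfAdjoint A)
    (Ω : H) (𝔖 : Submodule ℂ (H →L[ℂ] H)) (hclosed : IsClosed (𝔖 : Set (H →L[ℂ] H)))
    (hdom : ∀ X ∈ 𝔖, X Ω ∈ A.domain) :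
    ∃ C : ℝ, 0 < C ∧ ∀ X : H →L[ℂ] H, ∀ hX : X ∈ 𝔖, ‖A ⟨X Ω, hdom X hX⟩‖ ≤ C * ‖X‖ := by
  have : CompleteSpace 𝔖 := hclosed.completeSpace_coe
  let evalΩ : 𝔖 →L[ℂ] H := (ContinuousLinearMap.apply ℂ H Ω).comp 𝔖.subtypeL
  have hevalΩ : ∀ X, evalΩ X ∈ A.domain := fun X => hdom X X.2
  let Φ : 𝔖 →L[ℂ] H := ⟨_, LinearPMap.IsClosed.continuous_compOfMemDomain hA.isClosed evalΩ hevalΩ⟩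
  obtain ⟨C, hC, hΦ⟩ := Φ.bound
  exact ⟨C, hC, fun X hX => hΦ ⟨X, hX⟩⟩

/-- If `𝔖 ⊆ B(H)` is a norm-closed linear subspace such that `XΩ ∈ D(A)` for every `X ∈ 𝔖`,
where `A` is a densely defined self-adjoint operator on `H`, then the map `Φ : X ↦ A(XΩ)`
is automatically bounded: `‖A(XΩ)‖ ≤ C‖X‖` for some `C > 0` and all `X ∈ 𝔖`. -/
theorem phi_automatically_bounded_of_normClosed
    {H : Type*} [NormedAddCommGroup H] [InnerProductSpace ℂ H] [CompleteSpace H]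
    (A : H →ₗ.[ℂ] H) (hA : IsSelfAdjoint A) (hdense : Dense (A.domain : Set H))
    (Ω : H) (𝔖 : Submodule ℂ (H →L[ℂ] H)) (hclosed : IsClosed (𝔖 : Set (H →L[ℂ] H)))
    (hdom : ∀ X ∈ 𝔖, X Ω ∈ A.domain) :
    ∃ C : ℝ, 0 < C ∧ ∀ X : H →L[ℂ] H, ∀ hX : X ∈ 𝔖, ‖A ⟨X Ω, hdom X hX⟩‖ ≤ C * ‖X‖ :=
  phi_automatically_bounded_of_normClosed_general A hA Ω 𝔖 hclosed hdom
end

section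
/- Let M be a von Neumann algebra on a complex Hilbert space H, Ω ∈ H a cyclic unit vector for M, and A a densely defined positive self-adjoint operator on H such that XΩ ∈ D(A) for all X ∈ M, AΩ = Ω, and ‖A(XΩ)‖ ≤ ‖X‖ for all X ∈ M. Then for every X ∈ M one has ‖A(XΩ)‖² ≤ ‖XΩ‖² + ‖X*Ω‖². -/
open scoped InnerProductSpace

set_option maxHeartbeats 1000000 in
/-- Pisier–Haagerup step of Corollary 1.7: if `M` is a von Neumann algebra with cyclic unit
vector `Ω`, and `A` is a densely defined positive self-adjoint operator with `XΩ ∈ D(A)`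
for all `X ∈ M`, `AΩ = Ω` and `‖A(XΩ)‖ ≤ ‖X‖` for all `X ∈ M`, then
`‖A(XΩ)‖² ≤ ‖XΩ‖² + ‖X*Ω‖²` for every `X ∈ M`. -/
theorem pisier_haagerup_bound_for_beta_bounded_state
    {H : Type*} [NormedAddCommGroup H] [InnerProductSpace ℂ H] [CompleteSpace H]
    (M : VonNeumannAlgebra H) (Ω : H) (hΩ : ‖Ω‖ = 1)
    (hcyc : Dense (Submodule.span ℂ
      ((fun X : H →L[ℂ] H => X Ω) '' (M : Set (H →L[ℂ] H))) : Set H))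
    (A : H →ₗ.[ℂ] H) (hA : IsSelfAdjoint A) (hdense : Dense (A.domain : Set H))
    (hpos : ∀ x : A.domain, 0 ≤ (⟪A x, (x : H)⟫_ℂ).re)
    (hdom : ∀ X ∈ M, X Ω ∈ A.domain)
    (hΩdom : Ω ∈ A.domain) (hAΩ : A ⟨Ω, hΩdom⟩ = Ω)
    (hcontr : ∀ X : H →L[ℂ] H, ∀ hX : X ∈ M, ‖A ⟨X Ω, hdom X hX⟩‖ ≤ ‖X‖) :
    ∀ X : H →L[ℂ] H, ∀ hX : X ∈ M,
      ‖A ⟨X Ω, hdom X hX⟩‖ ^ 2 ≤ ‖X Ω‖ ^ 2 + ‖(star X) Ω‖ ^ 2 := by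
  haveI : Nontrivial H := by
    refine ⟨Ω, 0, fun e => ?_⟩
    rw [e, norm_zero] at hΩ; norm_num at hΩ
  -- symmetry of A
  have hsym : ∀ x y : A.domain, ⟪A x, (y : H)⟫_ℂ = ⟪(x : H), A y⟫_ℂ := by
    have h := LinearPMap.adjoint_isFormalAdjoint (T := A) hdense
    rw [LinearPMap.isSelfAdjoint_def] at hA
    rw [hA] at h
    exact h
  -- Key lemma: for self-adjoint elements h of M, ‖A(hΩ)‖² ≤ ‖hΩ‖².
  have key : ∀ (h : H →L[ℂ] H) (hM : h ∈ M), star h = h →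
      ‖A ⟨h Ω, hdom h hM⟩‖ ^ 2 ≤ ‖h Ω‖ ^ 2 := by
    intro h hM hsa
    have h2M : h ^ 2 ∈ M := by rw [sq]; exact mul_mem hM hM
    set b : H := A ⟨h Ω, hdom h hM⟩ with hb
    set c : H := A ⟨(h ^ 2) Ω, hdom _ h2M⟩ with hc
    -- ⟪Ω, b⟫ is real
    have hb_inner : ⟪Ω, b⟫_ℂ = ⟪Ω, h Ω⟫_ℂ := by
      have := hsym ⟨Ω, hΩdom⟩ ⟨h Ω, hdom h hM⟩
      rw [hAΩ] at this
      exact this.symm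
    have hreal : ⟪Ω, h Ω⟫_ℂ = ⟪h Ω, Ω⟫_ℂ := by
      conv_rhs => rw [← hsa]
      rw [ContinuousLinearMap.star_eq_adjoint, ContinuousLinearMap.adjoint_inner_left]
    have hb_im : (⟪Ω, b⟫_ℂ).im = 0 := by
      rw [hb_inner]
      have : (starRingEnd ℂ) ⟪Ω, h Ω⟫_ℂ = ⟪Ω, h Ω⟫_ℂ := by
        rw [inner_conj_symm, hreal]
      exact Complex.conj_eq_iff_im.mp this
    -- re ⟪Ω, c⟫ = ‖hΩ‖²
    have hc_inner : ⟪Ω, c⟫_ℂ = ⟪h Ω, h Ω⟫_ℂ := by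
      have h1 := hsym ⟨Ω, hΩdom⟩ ⟨(h ^ 2) Ω, hdom _ h2M⟩
      rw [hAΩ] at h1
      rw [← h1]
      show ⟪Ω, (h ^ 2) Ω⟫_ℂ = _
      have hadj : ContinuousLinearMap.adjoint h = h := by
        rw [← ContinuousLinearMap.star_eq_adjoint, hsa]
      have h2 : (h ^ 2) Ω = ContinuousLinearMap.adjoint h (h Ω) := by
        rw [hadj]; simp [sq]
      rw [h2, ContinuousLinearMap.adjoint_inner_right]
    have hc_re : (⟪Ω, c⟫_ℂ).re = ‖h Ω‖ ^ 2 := by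
      rw [hc_inner]
      have := inner_self_eq_norm_sq (𝕜 := ℂ) (h Ω)
      simpa [RCLike.re_to_complex] using this
    -- the main estimate for each small t > 0
    set C : ℝ := ‖b‖ * ‖c‖ + ‖h‖ ^ 4 / 4 with hC
    have hC0 : 0 ≤ C := by positivity
    have main : ∀ t : ℝ, 0 < t → t ≤ 1 → ‖b‖ ^ 2 - ‖h Ω‖ ^ 2 ≤ t * C := by
      intro t ht ht1
      set u : H →L[ℂ] H := 1 + (Complex.I * t) • h + (-((t : ℂ) ^ 2 / 2)) • (h ^ 2) with hu
      have huM : u ∈ M := by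
        exact add_mem (add_mem (one_mem M) (M.toStarSubalgebra.smul_mem hM _))
          (M.toStarSubalgebra.smul_mem h2M _)
      have huΩmem : u Ω ∈ A.domain := hdom u huM
      -- compute A(uΩ)
      have hveq : A ⟨u Ω, huΩmem⟩
          = Ω + (Complex.I * t) • b + (-((t : ℂ) ^ 2 / 2)) • c := by
        have hsubty : (⟨u Ω, huΩmem⟩ : A.domain)
            = ⟨Ω, hΩdom⟩ + (Complex.I * t) • ⟨h Ω, hdom h hM⟩
              + (-((t : ℂ) ^ 2 / 2)) • ⟨(h ^ 2) Ω, hdom _ h2M⟩ := by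
          apply Subtype.ext
          simp [hu, ContinuousLinearMap.add_apply, ContinuousLinearMap.smul_apply]
        rw [hsubty, A.map_add, A.map_add, A.map_smul, A.map_smul, hAΩ]
      -- upper bound on ‖u‖²
      have hustar : star u * u = 1 + (((t : ℂ) ^ 4 / 4)) • (h ^ 4) := by
        have hst : star (h ^ 2) = h ^ 2 := by rw [star_pow, hsa]
        rw [hu]
        simp only [star_add, star_smul, star_one, hsa, hst,
          Complex.star_def, Complex.conj_I, map_mul,
          map_neg, map_div₀, map_pow, Complex.conj_ofNat, Complex.conj_ofReal]
        simp only [mul_add, add_mul, smul_mul_assoc, mul_smul_comm, smul_smul, one_mul, mul_one]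
        simp only [← sq, ← pow_succ, ← pow_succ', ← pow_add, ← pow_mul]
        norm_num
        match_scalars <;> ring_nf <;> simp [Complex.I_sq] <;> ring_nf
      have hnorm1 : ‖(1 : H →L[ℂ] H)‖ = 1 := by
        rw [ContinuousLinearMap.one_def, ContinuousLinearMap.norm_id]
      have hu2 : ‖u‖ ^ 2 ≤ 1 + t ^ 4 * (‖h‖ ^ 4 / 4) := by
        have e1 : ‖u‖ ^ 2 = ‖star u * u‖ := by
          rw [CStarRing.norm_star_mul_self, sq]
        rw [e1, hustar]
        calc ‖(1 : H →L[ℂ] H) + (((t : ℂ) ^ 4 / 4)) • (h ^ 4)‖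
            ≤ ‖(1 : H →L[ℂ] H)‖ + ‖(((t : ℂ) ^ 4 / 4)) • (h ^ 4)‖ := norm_add_le _ _
          _ ≤ 1 + t ^ 4 * (‖h‖ ^ 4 / 4) := by
              rw [hnorm1, norm_smul]
              have e2 : ‖((t : ℂ) ^ 4 / 4)‖ = t ^ 4 / 4 := by
                rw [norm_div, norm_pow]
                simp [abs_of_pos ht]
              rw [e2]
              have : ‖h ^ 4‖ ≤ ‖h‖ ^ 4 := norm_pow_le' h (by norm_num)
              nlinarith [pow_pos ht 4]
      -- lower bound on ‖A(uΩ)‖²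
      set m : ℝ := ‖h Ω‖ with hm
      have hlow : 1 + t ^ 2 * (‖b‖ ^ 2 - m ^ 2) - t ^ 3 * (‖b‖ * ‖c‖)
          ≤ ‖Ω + (Complex.I * t) • b + (-((t : ℂ) ^ 2 / 2)) • c‖ ^ 2 := by
        have hrw : Ω + (Complex.I * t) • b + (-((t : ℂ) ^ 2 / 2)) • c
            = (Ω + (-((t : ℂ) ^ 2 / 2)) • c) + (Complex.I * t) • b := by
          abel
        rw [hrw]
        set w : H := Ω + (-((t : ℂ) ^ 2 / 2)) • c with hw
        set z : H := (Complex.I * t) • b with hz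
        have e0 : ‖w + z‖ ^ 2 = ‖w‖ ^ 2 + 2 * (⟪w, z⟫_ℂ).re + ‖z‖ ^ 2 := by
          have := norm_add_sq (𝕜 := ℂ) w z
          simpa [RCLike.re_to_complex] using this
        have ez : ‖z‖ = t * ‖b‖ := by
          rw [hz, norm_smul]
          simp [abs_of_pos ht]
        have ew : ‖w‖ ^ 2 = 1 - t ^ 2 * m ^ 2 + (t ^ 2 / 2) ^ 2 * ‖c‖ ^ 2 := by
          have h0 : ‖Ω + (-((t : ℂ) ^ 2 / 2)) • c‖ ^ 2
              = ‖Ω‖ ^ 2 + 2 * (⟪Ω, (-((t : ℂ) ^ 2 / 2)) • c⟫_ℂ).re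
                + ‖(-((t : ℂ) ^ 2 / 2)) • c‖ ^ 2 := by
            have := norm_add_sq (𝕜 := ℂ) Ω ((-((t : ℂ) ^ 2 / 2)) • c)
            simpa [RCLike.re_to_complex] using this
          rw [hΩ] at h0
          rw [hw, h0, inner_smul_right, norm_smul]
          have : ‖(-((t : ℂ) ^ 2 / 2))‖ = t ^ 2 / 2 := by
            rw [norm_neg, norm_div, norm_pow]
            simp [abs_of_pos ht]
          rw [this]
          rw [mul_pow]
          have : ((-((t : ℂ) ^ 2 / 2)) * ⟪Ω, c⟫_ℂ).re = -(t ^ 2 / 2) * (⟪Ω, c⟫_ℂ).re := by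
            have : (-((t : ℂ) ^ 2 / 2)) = ((-(t ^ 2 / 2) : ℝ) : ℂ) := by push_cast; ring
            rw [this, Complex.re_ofReal_mul]
          rw [this, hc_re]
          ring
        have einner : (⟪w, z⟫_ℂ).re ≥ -(t ^ 3 / 2 * (‖b‖ * ‖c‖)) := by
          have esp : ⟪w, z⟫_ℂ = ⟪Ω, z⟫_ℂ + ⟪(-((t : ℂ) ^ 2 / 2)) • c, z⟫_ℂ := by
            rw [hw, inner_add_left]
          have e1 : (⟪Ω, z⟫_ℂ).re = 0 := by
            rw [hz, inner_smul_right]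
            have : (Complex.I * t * ⟪Ω, b⟫_ℂ).re
                = -(t * (⟪Ω, b⟫_ℂ).im) := by
              simp [Complex.mul_re, Complex.mul_im]
              try ring
            rw [this, hb_im]
            try simp
          have e2 : |(⟪(-((t : ℂ) ^ 2 / 2)) • c, z⟫_ℂ).re| ≤ t ^ 3 / 2 * (‖b‖ * ‖c‖) := by
            have := norm_inner_le_norm (𝕜 := ℂ) ((-((t : ℂ) ^ 2 / 2)) • c) z
            have habs : |(⟪(-((t : ℂ) ^ 2 / 2)) • c, z⟫_ℂ).re|
                ≤ ‖⟪(-((t : ℂ) ^ 2 / 2)) • c, z⟫_ℂ‖ := Complex.abs_re_le_norm _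
            have hnc : ‖(-((t : ℂ) ^ 2 / 2)) • c‖ = t ^ 2 / 2 * ‖c‖ := by
              rw [norm_smul, norm_neg, norm_div, norm_pow]
              simp [abs_of_pos ht]
            have hnz : ‖z‖ = t * ‖b‖ := ez
            calc |(⟪(-((t : ℂ) ^ 2 / 2)) • c, z⟫_ℂ).re|
                ≤ ‖(-((t : ℂ) ^ 2 / 2)) • c‖ * ‖z‖ := le_trans habs this
              _ = t ^ 3 / 2 * (‖b‖ * ‖c‖) := by rw [hnc, hnz]; ring
          rw [esp]
          have := abs_le.mp e2
          simp only [Complex.add_re]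
          rw [e1]
          linarith [this.1]
        rw [e0, ew, ez]
        nlinarith [einner, sq_nonneg (t ^ 2 / 2) , sq_nonneg ‖c‖, mul_pos ht ht]
      -- combine
      have hub : ‖Ω + (Complex.I * t) • b + (-((t : ℂ) ^ 2 / 2)) • c‖ ≤ ‖u‖ := by
        rw [← hveq]; exact hcontr u huM
      have hub2 : ‖Ω + (Complex.I * t) • b + (-((t : ℂ) ^ 2 / 2)) • c‖ ^ 2 ≤ ‖u‖ ^ 2 := by
        have hnn : (0:ℝ) ≤ ‖Ω + (Complex.I * t) • b + (-((t : ℂ) ^ 2 / 2)) • c‖ := norm_nonneg _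
        nlinarith
      have hcomb : 1 + t ^ 2 * (‖b‖ ^ 2 - m ^ 2) - t ^ 3 * (‖b‖ * ‖c‖)
          ≤ 1 + t ^ 4 * (‖h‖ ^ 4 / 4) := le_trans hlow (le_trans hub2 hu2)
      -- divide by t²
      have ht2 : (0:ℝ) < t ^ 2 := by positivity
      rw [hC]
      have h4le : t ^ 4 ≤ t ^ 3 := by
        calc t ^ 4 = t ^ 3 * t := by ring
        _ ≤ t ^ 3 * 1 := by
            apply mul_le_mul_of_nonneg_left ht1 (by positivity)
        _ = t ^ 3 := by ring
      nlinarith [pow_pos ht 3, pow_pos ht 2, mul_le_mul_of_nonneg_right h4le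
        (show (0:ℝ) ≤ ‖h‖ ^ 4 / 4 by positivity)]
    -- take t → 0
    have : ‖b‖ ^ 2 ≤ ‖h Ω‖ ^ 2 := by
      refine le_of_forall_pos_le_add fun ε hε => ?_
      set t : ℝ := min 1 (ε / (C + 1)) with htdef
      have ht0 : 0 < t := lt_min one_pos (by positivity)
      have ht1 : t ≤ 1 := min_le_left _ _
      have h1 := main t ht0 ht1
      have h2 : t * C ≤ ε := by
        have h3 : t ≤ ε / (C + 1) := min_le_right _ _
        have h4 : t * C ≤ (ε / (C + 1)) * C :=
          mul_le_mul_of_nonneg_right h3 hC0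
        have h5 : (ε / (C + 1)) * C ≤ ε := by
          rw [div_mul_eq_mul_div, div_le_iff₀ (by linarith)]
          nlinarith [hε.le, hC0]
        exact le_trans h4 h5
      linarith
    exact this
  -- general X : decompose into real and imaginary parts
  intro X hX
  have hXstar : star X ∈ M := star_mem hX
  set h : H →L[ℂ] H := ((2 : ℂ)⁻¹) • (X + star X) with hhdef
  set k : H →L[ℂ] H := (-(Complex.I) / 2) • (X - star X) with hkdef
  have hMh : h ∈ M := M.toStarSubalgebra.smul_mem (add_mem hX hXstar) _
  have hMk : k ∈ M := M.toStarSubalgebra.smul_mem (sub_mem hX hXstar) _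
  have hsah : star h = h := by
    rw [hhdef, star_smul, star_add, star_star]
    simp [Complex.star_def, add_comm]
  have hsak : star k = k := by
    rw [hkdef, star_smul, star_sub, star_star]
    simp only [Complex.star_def, map_div₀, map_neg, Complex.conj_I, Complex.conj_ofNat]
    match_scalars <;> ring_nf <;> simp [Complex.I_sq] <;> ring_nf
  have hdecomp : X = h + Complex.I • k := by
    rw [hhdef, hkdef]
    match_scalars <;> ring_nf <;> simp [Complex.I_sq] <;> ring_nf
  -- apply key lemma to h and k
  have keyh := key h hMh hsah
  have keyk := key k hMk hsak
  -- A(XΩ) = A(hΩ) + i A(kΩ)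
  have hXΩ : (⟨X Ω, hdom X hX⟩ : A.domain)
      = ⟨h Ω, hdom h hMh⟩ + Complex.I • ⟨k Ω, hdom k hMk⟩ := by
    apply Subtype.ext
    have : X Ω = h Ω + Complex.I • (k Ω) := by
      conv_lhs => rw [hdecomp]
      simp [ContinuousLinearMap.add_apply, ContinuousLinearMap.smul_apply]
    simpa using this
  have hsplit : A ⟨X Ω, hdom X hX⟩
      = A ⟨h Ω, hdom h hMh⟩ + Complex.I • A ⟨k Ω, hdom k hMk⟩ := by
    rw [hXΩ, A.map_add, A.map_smul]
  -- norms of hΩ, kΩ via parallelogram law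
  have hhΩ : h Ω = ((2 : ℂ)⁻¹) • (X Ω + (star X) Ω) := by
    rw [hhdef]; simp [ContinuousLinearMap.add_apply, ContinuousLinearMap.smul_apply]
  have hkΩ : k Ω = (-(Complex.I) / 2) • (X Ω - (star X) Ω) := by
    rw [hkdef]; simp [ContinuousLinearMap.sub_apply, ContinuousLinearMap.smul_apply]
  have hnh : ‖h Ω‖ = ‖X Ω + (star X) Ω‖ / 2 := by
    rw [hhΩ, norm_smul]
    simp; ring
  have hnk : ‖k Ω‖ = ‖X Ω - (star X) Ω‖ / 2 := by
    rw [hkΩ, norm_smul]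
    have : ‖(-(Complex.I) / 2 : ℂ)‖ = 1 / 2 := by
      rw [norm_div, norm_neg, Complex.norm_I]
      simp
    rw [this]; ring
  have hpar := parallelogram_law_with_norm ℂ (X Ω) ((star X) Ω)
  -- final arithmetic
  rw [hsplit]
  have hba : ‖A ⟨h Ω, hdom h hMh⟩ + Complex.I • A ⟨k Ω, hdom k hMk⟩‖
      ≤ ‖A ⟨h Ω, hdom h hMh⟩‖ + ‖A ⟨k Ω, hdom k hMk⟩‖ := by
    calc ‖A ⟨h Ω, hdom h hMh⟩ + Complex.I • A ⟨k Ω, hdom k hMk⟩‖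
        ≤ ‖A ⟨h Ω, hdom h hMh⟩‖ + ‖Complex.I • A ⟨k Ω, hdom k hMk⟩‖ := norm_add_le _ _
      _ = ‖A ⟨h Ω, hdom h hMh⟩‖ + ‖A ⟨k Ω, hdom k hMk⟩‖ := by
          rw [norm_smul, Complex.norm_I, one_mul]
  have h2 : ‖A ⟨h Ω, hdom h hMh⟩ + Complex.I • A ⟨k Ω, hdom k hMk⟩‖ ^ 2
      ≤ 2 * (‖A ⟨h Ω, hdom h hMh⟩‖ ^ 2 + ‖A ⟨k Ω, hdom k hMk⟩‖ ^ 2) := by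
    nlinarith [norm_nonneg (A ⟨h Ω, hdom h hMh⟩), norm_nonneg (A ⟨k Ω, hdom k hMk⟩),
      sq_nonneg (‖A ⟨h Ω, hdom h hMh⟩‖ - ‖A ⟨k Ω, hdom k hMk⟩‖), norm_nonneg
      (A ⟨h Ω, hdom h hMh⟩ + Complex.I • A ⟨k Ω, hdom k hMk⟩)]
  have h3 : 2 * (‖h Ω‖ ^ 2 + ‖k Ω‖ ^ 2) = ‖X Ω‖ ^ 2 + ‖(star X) Ω‖ ^ 2 := by
    rw [hnh, hnk]
    nlinarith [hpar]
  nlinarith [keyh, keyk]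
end

section
/- Let μ be a finite Borel measure on ℝ supported on [0, ∞) and β > 0. Suppose φ : (-∞, β] → ℂ is continuous, (real-)analytic on the open half-line (-∞, β), and satisfies φ(x) = ∫ e^{xλ} dμ(λ) for every x ≤ 0. Then λ ↦ e^{βλ} belongs to L¹(μ), and φ(x) = ∫ e^{xλ} dμ(λ) for every x ∈ (-∞, β]. -/
/-!
The function `M x = ∫ e^{xλ} dμ(λ)` is analytic on the interior of the set where it is finite,
with Taylor coefficients `∫ λⁿ e^{xλ} dμ(λ) / n!` at `x`, all nonnegative because `μ` lives on
`[0, ∞)`. By the identity theorem `φ = M` below the abscissa of convergence `b`. If `b < β`,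
then `φ` is analytic at `b`, so its Taylor series at `b - ε`, which is that of `M`, converges at
`b + ε`; by Tonelli its sum is `∫ e^{(b+ε)λ} dμ(λ)`, contradicting the maximality of `b`. At `β`
itself, monotone convergence and the continuity of `φ` give `∫ e^{βλ} dμ(λ) = φ β < ∞`.
-/

open MeasureTheory Filter Topology ProbabilityTheory Set
open scoped ENNReal NNReal

namespace ProbabilityTheory

variable {Ω : Type*} {m : MeasurableSpace Ω} {X : Ω → ℝ} {μ : Measure Ω} {x y c : ℝ}

lemma mem_integrableExpSet_of_le (hX : AEMeasurable X μ) (hX0 : 0 ≤ᵐ[μ] X)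
    (hy : y ∈ integrableExpSet X μ) (hxy : x ≤ y) : x ∈ integrableExpSet X μ := by
  refine Integrable.mono' hy (by fun_prop) ?_
  filter_upwards [hX0] with ω hω
  rw [Real.norm_of_nonneg (Real.exp_nonneg _)]
  exact Real.exp_le_exp.2 (mul_le_mul_of_nonneg_right hxy hω)

lemma add_mem_integrableExpSet_of_summable (hX0 : 0 ≤ᵐ[μ] X) {v t : ℝ}
    (hv : v ∈ interior (integrableExpSet X μ)) (ht : 0 ≤ t)
    (hsum : Summable fun n => μ[fun ω => X ω ^ n * Real.exp (v * X ω)] / n.factorial * t ^ n) :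
    v + t ∈ integrableExpSet X μ := by
  have hX := aemeasurable_of_mem_interior_integrableExpSet hv
  set g : ℕ → Ω → ℝ := fun n ω => X ω ^ n * Real.exp (v * X ω) / n.factorial * t ^ n
  have hg_nonneg : ∀ᵐ ω ∂μ, ∀ n, 0 ≤ g n ω := by
    filter_upwards [hX0] with ω hω n
    have := pow_nonneg hω n
    positivity
  have hg_hasSum : ∀ ω, HasSum (fun n => g n ω) (Real.exp ((v + t) * X ω)) := by
    intro ω
    have h := (NormedSpace.expSeries_div_hasSum_exp (t * X ω)).mul_left (Real.exp (v * X ω))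
    rw [← Real.exp_eq_exp_ℝ, ← Real.exp_add, ← add_mul] at h
    have hg : (fun n => g n ω) = fun n => Real.exp (v * X ω) * ((t * X ω) ^ n / n.factorial) := by
      funext n
      simp only [g]
      ring
    rwa [hg]
  have hg_integrable : ∀ n, Integrable (g n) μ := fun n =>
    ((integrable_pow_mul_exp_of_mem_interior_integrableExpSet hv n).div_const _).mul_const _
  have hg_integral : ∀ n,
      μ[g n] = μ[fun ω => X ω ^ n * Real.exp (v * X ω)] / n.factorial * t ^ n := fun n => by
    simp only [g, integral_mul_const, integral_div]
  rw [integrableExpSet, mem_ofPred_eq, ← lintegral_ofReal_ne_top_iff_integrable (by fun_prop)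
    (ae_of_all _ fun ω => Real.exp_nonneg _)]
  calc ∫⁻ ω, ENNReal.ofReal (Real.exp ((v + t) * X ω)) ∂μ
      = ∫⁻ ω, ∑' n, ENNReal.ofReal (g n ω) ∂μ := by
        refine lintegral_congr_ae ?_
        filter_upwards [hg_nonneg] with ω hω
        rw [← (hg_hasSum ω).tsum_eq, ENNReal.ofReal_tsum_of_nonneg hω (hg_hasSum ω).summable]
    _ = ∑' n, ENNReal.ofReal (μ[g n]) := by
        rw [lintegral_tsum fun n => (hg_integrable n).1.aemeasurable.ennreal_ofReal]
        congr 1 with n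
        rw [ofReal_integral_eq_lintegral_ofReal (hg_integrable n)]
        filter_upwards [hg_nonneg] with ω hω using hω n
    _ = ENNReal.ofReal (∑' n, μ[g n]) := by
        refine (ENNReal.ofReal_tsum_of_nonneg (fun n => ?_)
          (by simpa only [hg_integral] using hsum)).symm
        exact integral_nonneg_of_ae (by filter_upwards [hg_nonneg] with ω hω using hω n)
    _ ≠ ∞ := ENNReal.ofReal_ne_top

lemma mem_integrableExpSet_and_mgf_eq_of_tendsto (hX0 : 0 ≤ᵐ[μ] X)
    (hc : Iio c ⊆ integrableExpSet X μ) {a : ℝ} (ha : Tendsto (mgf X μ) (𝓝[<] c) (𝓝 a)) :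
    c ∈ integrableExpSet X μ ∧ mgf X μ c = a := by
  have hX : AEMeasurable X μ := aemeasurable_of_mem_interior_integrableExpSet
    (interior_maximal hc isOpen_Iio (sub_one_lt c))
  obtain ⟨u, hu_mono, hu_lt, hu_tend⟩ := exists_seq_strictMono_tendsto_nhdsWithin c
  have h_lintegral : ∀ x ∈ integrableExpSet X μ,
      ∫⁻ ω, ENNReal.ofReal (Real.exp (x * X ω)) ∂μ = ENNReal.ofReal (mgf X μ x) := fun x hx =>
    (ofReal_integral_eq_lintegral_ofReal hx (ae_of_all _ fun ω => Real.exp_nonneg _)).symm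
  have h_monotone : Tendsto (fun n => ∫⁻ ω, ENNReal.ofReal (Real.exp (u n * X ω)) ∂μ) atTop
      (𝓝 (∫⁻ ω, ENNReal.ofReal (Real.exp (c * X ω)) ∂μ)) := by
    refine lintegral_tendsto_of_tendsto_of_monotone (fun n => by fun_prop) ?_
      (ae_of_all _ fun ω => ?_)
    · filter_upwards [hX0] with ω hω n k hnk
      exact ENNReal.ofReal_le_ofReal (Real.exp_le_exp.2
        (mul_le_mul_of_nonneg_right (hu_mono.monotone hnk) hω))
    · exact (ENNReal.continuous_ofReal.comp (Real.continuous_exp.comp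
        (continuous_mul_const (X ω)))).continuousAt.tendsto.comp
          (tendsto_nhds_of_tendsto_nhdsWithin hu_tend)
  have h_lim : ∫⁻ ω, ENNReal.ofReal (Real.exp (c * X ω)) ∂μ = ENNReal.ofReal a := by
    refine tendsto_nhds_unique h_monotone ?_
    simp only [h_lintegral _ (hc (hu_lt _))]
    exact (ENNReal.continuous_ofReal.tendsto a).comp (ha.comp hu_tend)
  have hcI : c ∈ integrableExpSet X μ :=
    (lintegral_ofReal_ne_top_iff_integrable (by fun_prop)
      (ae_of_all _ fun ω => Real.exp_nonneg _)).1 (h_lim ▸ ENNReal.ofReal_ne_top)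
  have ha_nonneg : 0 ≤ a := ge_of_tendsto ha (Eventually.of_forall fun x => mgf_nonneg)
  refine ⟨hcI, (ENNReal.ofReal_eq_ofReal_iff mgf_nonneg ha_nonneg).1 ?_⟩
  rw [← h_lintegral c hcI, h_lim]

lemma exists_pos_add_mem_integrableExpSet_of_analyticAt (hX0 : 0 ≤ᵐ[μ] X)
    (hc : Iio c ⊆ integrableExpSet X μ) {f : ℝ → ℝ} (hf : AnalyticAt ℝ f c)
    (hfc : EqOn f (mgf X μ) (Iio c)) :
    ∃ ε > 0, c + ε ∈ integrableExpSet X μ := by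
  obtain ⟨p, r, hp⟩ := hf
  obtain ⟨δ, hδ, hδr⟩ := ENNReal.lt_iff_exists_nnreal_btwn.1 hp.r_pos
  set ε : ℝ≥0 := δ / 3
  have hε : (0 : ℝ) < ε := div_pos (ENNReal.coe_pos.1 hδ) (by norm_num)
  have hδε : δ = 2 * ε + ε := by
    simp only [ε]
    ring
  have h_norm : ‖-(ε : ℝ)‖₊ = ε := by simp
  have hεr : (‖-(ε : ℝ)‖₊ : ℝ≥0∞) < r := by
    rw [h_norm]
    exact lt_of_le_of_lt (by rw [hδε]; exact_mod_cast le_add_self) hδr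
  have h_origin := hp.changeOrigin hεr
  rw [← sub_eq_add_neg] at h_origin
  have hv : c - ε ∈ interior (integrableExpSet X μ) :=
    interior_maximal hc isOpen_Iio (sub_lt_self c hε)
  have h_mgf : HasFPowerSeriesAt f _ (c - ε) :=
    (hasFPowerSeriesAt_mgf hv).congr (eventuallyEq_of_mem
      (Iio_mem_nhds (sub_lt_self c hε)) fun x hx => (hfc hx).symm)
  have h_radius := h_origin.r_le
  rw [h_origin.hasFPowerSeriesAt.eq_formalMultilinearSeries h_mgf] at h_radius
  have h_summable := FormalMultilinearSeries.summable_norm_mul_pow _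
    ((show ((2 * ε : ℝ≥0) : ℝ≥0∞) < r - ‖-(ε : ℝ)‖₊ by
      rw [h_norm, lt_tsub_iff_right]
      exact_mod_cast hδε ▸ hδr).trans_le h_radius)
  refine ⟨ε, hε, ?_⟩
  have h_mem := add_mem_integrableExpSet_of_summable hX0 hv (t := 2 * ε) (by positivity) ?_
  · convert h_mem using 1
    ring
  · refine h_summable.congr fun n => ?_
    rw [FormalMultilinearSeries.ofScalars_norm, Real.norm_of_nonneg]
    · rfl
    · refine div_nonneg (integral_nonneg_of_ae ?_) (Nat.cast_nonneg _)
      filter_upwards [hX0] with ω hω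
      exact mul_nonneg (pow_nonneg hω n) (Real.exp_nonneg _)

lemma eqOn_ofReal_mgf_of_analyticOnNhd {φ : ℝ → ℂ} (hφ : AnalyticOnNhd ℝ φ (Iio c))
    (hc : Iio c ⊆ integrableExpSet X μ) (h0 : ∀ x ≤ 0, φ x = mgf X μ x) :
    EqOn φ (fun x => (mgf X μ x : ℂ)) (Iio c) := by
  have h_mgf : AnalyticOnNhd ℝ (fun x => (mgf X μ x : ℂ)) (Iio c) := fun x hx =>
    Complex.ofRealCLM.analyticAt _ |>.comp (analyticAt_mgf (interior_maximal hc isOpen_Iio hx))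
  have hz : min c 0 - 1 < min c 0 := sub_one_lt _
  refine hφ.eqOn_of_preconnected_of_eventuallyEq h_mgf isPreconnected_Iio
    (hz.trans_le (min_le_left c 0)) ?_
  filter_upwards [Iio_mem_nhds (hz.trans_le (min_le_right c 0))] with x hx using h0 x hx.le

lemma Iio_subset_integrableExpSet_of_analyticOnNhd [IsFiniteMeasure μ] (hX : AEMeasurable X μ)
    (hX0 : 0 ≤ᵐ[μ] X) {β : ℝ} {φ : ℝ → ℂ} (hφ : AnalyticOnNhd ℝ φ (Iio β))
    (h0 : ∀ x ≤ 0, φ x = mgf X μ x) :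
    Iio β ⊆ integrableExpSet X μ := by
  by_contra h
  obtain ⟨x, hxβ, hx⟩ := not_subset.1 h
  have h_le : ∀ y ∈ integrableExpSet X μ, y ≤ x := fun y hy =>
    le_of_not_gt fun hxy => hx (mem_integrableExpSet_of_le hX hX0 hy hxy.le)
  have h_ne : (integrableExpSet X μ).Nonempty := ⟨0, by simp [integrableExpSet]⟩
  set b := sSup (integrableExpSet X μ)
  have hb : Iio b ⊆ integrableExpSet X μ := fun y hy => by
    obtain ⟨z, hz, hyz⟩ := exists_lt_of_lt_csSup h_ne hy
    exact mem_integrableExpSet_of_le hX hX0 hz hyz.le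
  have hbβ : b < β := (csSup_le h_ne h_le).trans_lt hxβ
  have h_eq := eqOn_ofReal_mgf_of_analyticOnNhd (hφ.mono (Iio_subset_Iio hbβ.le)) hb h0
  obtain ⟨ε, hε, hbε⟩ := exists_pos_add_mem_integrableExpSet_of_analyticAt hX0 hb
    (Complex.reCLM.analyticAt _ |>.comp (hφ b hbβ)) fun y hy => by simp [h_eq hy]
  exact (le_csSup ⟨x, h_le⟩ hbε).not_gt (lt_add_of_pos_right b hε)

end ProbabilityTheory

theorem analytic_continuation_of_laplace_transform_general
    (μ : Measure ℝ) [IsFiniteMeasure μ] (hsupp : μ (Set.Iio (0 : ℝ)) = 0)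
    (β : ℝ) (φ : ℝ → ℂ)
    (hcont : ContinuousOn φ (Set.Iic β))
    (hanal : AnalyticOnNhd ℝ φ (Set.Iio β))
    (hval : ∀ x : ℝ, x ≤ 0 → φ x = ((∫ l : ℝ, Real.exp (x * l) ∂μ : ℝ) : ℂ)) :
    Integrable (fun l : ℝ => Real.exp (β * l)) μ ∧
    ∀ x : ℝ, x ≤ β → φ x = ((∫ l : ℝ, Real.exp (x * l) ∂μ : ℝ) : ℂ) := by
  have hX0 : 0 ≤ᵐ[μ] id := by
    filter_upwards [measure_eq_zero_iff_ae_notMem.1 hsupp] with l hl using not_lt.1 hl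
  have hI := Iio_subset_integrableExpSet_of_analyticOnNhd aemeasurable_id hX0 hanal hval
  have h_eq := eqOn_ofReal_mgf_of_analyticOnNhd hanal hI hval
  have h_lim : Tendsto (fun x => (mgf id μ x : ℂ)) (𝓝[<] β) (𝓝 (φ β)) :=
    ((hcont β self_mem_Iic).mono Iio_subset_Iic_self).tendsto.congr'
      (eventuallyEq_nhdsWithin_of_eqOn h_eq)
  have h_re : Tendsto (mgf id μ) (𝓝[<] β) (𝓝 (φ β).re) :=
    (Complex.continuous_re.tendsto _).comp h_lim
  have hφβ : φ β = (φ β).re :=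
    tendsto_nhds_unique h_lim ((Complex.continuous_ofReal.tendsto _).comp h_re)
  obtain ⟨hβI, h_mgfβ⟩ := mem_integrableExpSet_and_mgf_eq_of_tendsto hX0 hI h_re
  refine ⟨hβI, fun x hx => hx.lt_or_eq.elim (fun hxβ => h_eq hxβ) ?_⟩
  rintro rfl
  rw [hφβ, ← h_mgfβ]
  rfl

/-- Analytic-continuation step of the Sublemma: let `μ` be a finite Borel measure on `ℝ`
supported on `[0, ∞)` and `β > 0`. If `φ : ℝ → ℂ` is continuous on `(-∞, β]`, real-analytic
on `(-∞, β)`, and `φ(x) = ∫ e^{xλ} dμ(λ)` for all `x ≤ 0`, then `λ ↦ e^{βλ}` is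
`μ`-integrable and `φ(x) = ∫ e^{xλ} dμ(λ)` for all `x ≤ β`. -/
theorem analytic_continuation_of_laplace_transform
    (μ : Measure ℝ) [IsFiniteMeasure μ] (hsupp : μ (Set.Iio (0 : ℝ)) = 0)
    (β : ℝ) (hβ : 0 < β) (φ : ℝ → ℂ)
    (hcont : ContinuousOn φ (Set.Iic β))
    (hanal : AnalyticOnNhd ℝ φ (Set.Iio β))
    (hval : ∀ x : ℝ, x ≤ 0 → φ x = ((∫ l : ℝ, Real.exp (x * l) ∂μ : ℝ) : ℂ)) :
    Integrable (fun l : ℝ => Real.exp (β * l)) μ ∧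
    ∀ x : ℝ, x ≤ β → φ x = ((∫ l : ℝ, Real.exp (x * l) ∂μ : ℝ) : ℂ) :=
  analytic_continuation_of_laplace_transform_general μ hsupp β φ hcont hanal hval
end
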